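/- (Theorem 1) Fix λ > 0 and let S be a nonnegative real-valued random variable with finite expectation E[S]. For t > 0 set X(t) := (1/t) ∫₀ᵗ ℙ(S > s) ds, and for each natural number i define p_i(t) := ∑_{n=i}^{∞} e^{-λt} (λt)^n / n! · (n choose i) X(t)^i (1 − X(t))^{n−i}. Then for every natural number i, lim_{t→∞} p_i(t) = e^{-λ E[S]} (λ E[S])^i / i!. That is, the limiting distribution of the system size is Poisson with parameter λ E[S]. -/

import Mathlib

/-!
Binomial thinning of a Poisson(`λt`) count with retention probability `X(t)` is Poisson(`λ t X(t)`),
so `p_i(t)` is the Poisson(`λ t X(t)`) mass at `i`. By the tail formula for the mean,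
`t X(t) = ∫₀ᵗ ℙ(S > s) ds → E[S]`, and the Poisson mass is continuous in its parameter.
-/

open MeasureTheory Filter Set
open scoped Nat Topology

lemma Real.hasSum_pow_div_factorial (y : ℝ) : HasSum (fun n : ℕ => y ^ n / n !) (Real.exp y) := by
  rw [Real.exp_eq_exp_ℝ]
  exact NormedSpace.expSeries_div_hasSum_exp y

lemma poisson_mul_binomial_add (a x : ℝ) (i k : ℕ) :
    Real.exp (-a) * a ^ (i + k) / (i + k)! * ((i + k).choose i * x ^ i * (1 - x) ^ k)
      = Real.exp (-a) * (a * x) ^ i / i ! * ((a * (1 - x)) ^ k / k !) := by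
  have hfac : ((i + k)! : ℝ) = (i + k).choose i * i ! * k ! := by
    rw [Nat.choose_symm_add]
    exact_mod_cast (Nat.add_choose_mul_factorial_mul_factorial i k).symm
  have hchoose : ((i + k).choose i : ℝ) ≠ 0 :=
    Nat.cast_ne_zero.mpr (Nat.choose_pos (Nat.le_add_right i k)).ne'
  rw [hfac, mul_pow, mul_pow, pow_add]
  field_simp

theorem tsum_poisson_mul_binomial (a x : ℝ) (i : ℕ) :
    ∑' n : {n : ℕ // i ≤ n},
        Real.exp (-a) * a ^ (n : ℕ) / (n : ℕ)! * ((n : ℕ).choose i * x ^ i * (1 - x) ^ ((n : ℕ) - i))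
      = Real.exp (-(a * x)) * (a * x) ^ i / i ! := by
  let e : ℕ ≃ {n : ℕ // i ≤ n} :=
    { toFun := fun k => ⟨i + k, Nat.le_add_right i k⟩
      invFun := fun n => n - i
      left_inv := fun k => by simp
      right_inv := fun n => Subtype.ext (Nat.add_sub_cancel' n.2) }
  rw [← e.tsum_eq]
  have hsum := (Real.hasSum_pow_div_factorial (a * (1 - x))).mul_left
    (Real.exp (-a) * (a * x) ^ i / i !)
  convert hsum.tsum_eq using 1
  · exact tsum_congr fun k => by simpa [e] using poisson_mul_binomial_add a x i k
  · rw [show -(a * x) = -a + a * (1 - x) by ring, Real.exp_add]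
    ring

section TailIntegral

variable {μ : Measure ℝ}

theorem integrableOn_measureReal_Ioi (hint : Integrable (fun x : ℝ => x) μ)
    (hnn : 0 ≤ᵐ[μ] fun x : ℝ => x) :
    IntegrableOn (fun s => μ.real (Ioi s)) (Ioi 0) := by
  have hmeas : Measurable fun s : ℝ => μ (Ioi s) :=
    Antitone.measurable fun _ _ hst => measure_mono (Ioi_subset_Ioi hst)
  refine integrable_toReal_of_lintegral_ne_top hmeas.aemeasurable.restrict ?_
  change ∫⁻ t in Ioi 0, μ {a | t < a} ≠ ⊤
  rw [← lintegral_eq_lintegral_meas_lt μ hnn hint.aemeasurable]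
  exact hint.lintegral_lt_top.ne

theorem tendsto_intervalIntegral_measureReal_Ioi (hint : Integrable (fun x : ℝ => x) μ)
    (hnn : 0 ≤ᵐ[μ] fun x : ℝ => x) :
    Tendsto (fun t => ∫ s in (0 : ℝ)..t, μ.real (Ioi s)) atTop (𝓝 (∫ x, x ∂μ)) := by
  rw [hint.integral_eq_integral_meas_lt hnn]
  exact intervalIntegral_tendsto_integral_Ioi 0 (integrableOn_measureReal_Ioi hint hnn) tendsto_id

end TailIntegral

theorem limiting_distribution_poisson_general (l : ℝ)
    (μ : Measure ℝ) (hμ : μ (Set.Iio 0) = 0)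
    (hint : Integrable (fun x : ℝ => x) μ)
    (X : ℝ → ℝ) (hX : ∀ t, X t = (1 / t) * ∫ s in (0 : ℝ)..t, (μ (Set.Ioi s)).toReal)
    (p : ℕ → ℝ → ℝ)
    (hp : ∀ i t, p i t =
      ∑' n : {n : ℕ // i ≤ n},
        Real.exp (-(l * t)) * (l * t) ^ (n : ℕ) / (Nat.factorial (n : ℕ)) *
          ((Nat.choose (n : ℕ) i : ℝ) * X t ^ i * (1 - X t) ^ ((n : ℕ) - i))) :
    ∀ i : ℕ,
      Tendsto (fun t : ℝ => p i t) atTop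
        (nhds (Real.exp (-(l * ∫ x, x ∂μ)) * (l * ∫ x, x ∂μ) ^ i /
          (Nat.factorial i))) := by
  intro i
  have hnn : 0 ≤ᵐ[μ] fun x : ℝ => x := by
    filter_upwards [measure_eq_zero_iff_ae_notMem.mp hμ] with x hx
    simpa using hx
  have hpoisson : Continuous fun m : ℝ => Real.exp (-(l * m)) * (l * m) ^ i / i ! := by fun_prop
  refine ((hpoisson.tendsto _).comp (tendsto_intervalIntegral_measureReal_Ioi hint hnn)).congr' ?_
  filter_upwards [eventually_gt_atTop 0] with t ht
  have hmean : l * t * X t = l * ∫ s in (0 : ℝ)..t, μ.real (Ioi s) := by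
    rw [hX t]
    field_simp
    rfl
  rw [hp, tsum_poisson_mul_binomial, hmean]
  rfl

/-- (Theorem 1) Fix `λ > 0` and let `S` be a nonnegative random variable with
distribution `μ` and finite expectation `E[S] = ∫ x dμ`.  For `t > 0` set
`X(t) = (1/t) ∫₀ᵗ ℙ(S > s) ds`, and for each `i : ℕ` let
`p_i(t) = ∑_{n=i}^∞ e^{-λt} (λt)^n / n! · (n choose i) X(t)^i (1 - X(t))^{n-i}`.
Then for every `i`, `p_i(t) → e^{-λE[S]} (λE[S])^i / i!` as `t → ∞`:
the limiting distribution of the system size is Poisson with parameter `λ E[S]`. -/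
theorem limiting_distribution_poisson (l : ℝ) (hl : 0 < l)
    (μ : Measure ℝ) [IsProbabilityMeasure μ] (hμ : μ (Set.Iio 0) = 0)
    (hint : Integrable (fun x : ℝ => x) μ)
    (X : ℝ → ℝ) (hX : ∀ t, X t = (1 / t) * ∫ s in (0 : ℝ)..t, (μ (Set.Ioi s)).toReal)
    (p : ℕ → ℝ → ℝ)
    (hp : ∀ i t, p i t =
      ∑' n : {n : ℕ // i ≤ n},
        Real.exp (-(l * t)) * (l * t) ^ (n : ℕ) / (Nat.factorial (n : ℕ)) *
          ((Nat.choose (n : ℕ) i : ℝ) * X t ^ i * (1 - X t) ^ ((n : ℕ) - i))) :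
    ∀ i : ℕ,
      Tendsto (fun t : ℝ => p i t) atTop
        (nhds (Real.exp (-(l * ∫ x, x ∂μ)) * (l * ∫ x, x ∂μ) ^ i /
          (Nat.factorial i))) :=
  limiting_distribution_poisson_general l μ hμ hint X hX p hp
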